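/- Let u_1, …, u_n ∈ ℝ^p. Then the matrix Ω̆ = ( (1/n) Σ_{i=1}^n (u_i u_iᵀ)^{1/2} )² = ( (1/n) Σ_{i : u_i ≠ 0} u_i u_iᵀ / ‖u_i‖ )² is symmetric positive semidefinite and is the unique minimizer, over p×p symmetric positive semidefinite matrices Ω, of the functional Ω ↦ (1/n) Σ_{i=1}^n d_S²(Ω, u_i u_iᵀ). -/

import Mathlib

open Matrix MeasureTheory ProbabilityTheory

noncomputable def eunorm {p : ℕ} (x : Fin p → ℝ) : ℝ := Real.sqrt (∑ i, x i ^ 2)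

noncomputable def frob {p : ℕ} (M : Matrix (Fin p) (Fin p) ℝ) : ℝ :=
  Real.sqrt (∑ i, ∑ j, M i j ^ 2)

open Classical in
noncomputable def msqrt {p : ℕ} (A : Matrix (Fin p) (Fin p) ℝ) : Matrix (Fin p) (Fin p) ℝ :=
  if h : A.PosSemidef then
    (h.1.eigenvectorUnitary : Matrix (Fin p) (Fin p) ℝ) * diagonal ((↑) ∘ (√·) ∘ h.1.eigenvalues) *
      (star h.1.eigenvectorUnitary : Matrix (Fin p) (Fin p) ℝ) else 0

noncomputable def dS {p : ℕ} (A B : Matrix (Fin p) (Fin p) ℝ) : ℝ := frob (msqrt A - msqrt B)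

noncomputable def mExp {p : ℕ} {Ωs : Type*} [MeasurableSpace Ωs] (μ : Measure Ωs)
    (F : Ωs → Matrix (Fin p) (Fin p) ℝ) : Matrix (Fin p) (Fin p) ℝ :=
  Matrix.of fun i j => ∫ ω, F ω i j ∂μ

noncomputable def covDS {p : ℕ} {Ωs : Type*} [MeasurableSpace Ωs] (μ : Measure Ωs)
    (Y : Ωs → Fin p → ℝ) : Matrix (Fin p) (Fin p) ℝ :=
  (mExp μ fun ω => msqrt (vecMulVec (Y ω - fun r => ∫ ω', Y ω' r ∂μ) (Y ω - fun r => ∫ ω', Y ω' r ∂μ))) *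
  (mExp μ fun ω => msqrt (vecMulVec (Y ω - fun r => ∫ ω', Y ω' r ∂μ) (Y ω - fun r => ∫ ω', Y ω' r ∂μ)))
/-!
The objective depends on `Ω` only through `Ω^{1/2}`: it is the mean squared Frobenius distance
from `Ω^{1/2}` to the points `(uᵢuᵢᵀ)^{1/2}`. In a Euclidean space the mean squared distance to
finitely many points is, up to a constant, the squared distance to their mean, so it is minimized
exactly at the mean `(1/n) Σᵢ (uᵢuᵢᵀ)^{1/2}`. That mean is positive semidefinite, hence is the
square root of some admissible `Ω`, namely its square; and `(uuᵀ)^{1/2} = uuᵀ/‖u‖` because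
`(uuᵀ)² = ‖u‖² uuᵀ`.
-/

open scoped InnerProductSpace MatrixOrder

section MeanSquaredDistance

variable {E ι : Type*} [NormedAddCommGroup E] [InnerProductSpace ℝ E] [Fintype ι] [Nonempty ι]

theorem sum_norm_sub_sq_eq_card_mul_add (v : ι → E) (x : E) :
    ∑ i, ‖x - v i‖ ^ 2 =
      Fintype.card ι * ‖x - (Fintype.card ι : ℝ)⁻¹ • ∑ j, v j‖ ^ 2 +
        ∑ i, ‖(Fintype.card ι : ℝ)⁻¹ • ∑ j, v j - v i‖ ^ 2 := by
  set c := (Fintype.card ι : ℝ)⁻¹ • ∑ j, v j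
  have hdev : ∑ i, (c - v i) = 0 := by
    rw [Finset.sum_sub_distrib, Finset.sum_const, Finset.card_univ, ← Nat.cast_smul_eq_nsmul ℝ,
      smul_smul, mul_inv_cancel₀ (by positivity), one_smul, sub_self]
  calc ∑ i, ‖x - v i‖ ^ 2
      = ∑ i, (‖x - c‖ ^ 2 + 2 * ⟪x - c, c - v i⟫_ℝ + ‖c - v i‖ ^ 2) := by
        refine Finset.sum_congr rfl fun i _ => ?_
        rw [← norm_add_sq_real, sub_add_sub_cancel]
    _ = Fintype.card ι * ‖x - c‖ ^ 2 + ∑ i, ‖c - v i‖ ^ 2 := by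
        rw [Finset.sum_add_distrib, Finset.sum_add_distrib, ← Finset.mul_sum, ← inner_sum, hdev,
          inner_zero_right]
        simp

theorem sum_norm_mean_sub_sq_le (v : ι → E) (x : E) :
    ∑ i, ‖(Fintype.card ι : ℝ)⁻¹ • ∑ j, v j - v i‖ ^ 2 ≤ ∑ i, ‖x - v i‖ ^ 2 := by
  rw [sum_norm_sub_sq_eq_card_mul_add v x]
  exact le_add_of_nonneg_left (by positivity)

theorem eq_mean_of_sum_norm_sub_sq_le {v : ι → E} {x : E}
    (h : ∑ i, ‖x - v i‖ ^ 2 ≤ ∑ i, ‖(Fintype.card ι : ℝ)⁻¹ • ∑ j, v j - v i‖ ^ 2) :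
    x = (Fintype.card ι : ℝ)⁻¹ • ∑ j, v j := by
  rw [sum_norm_sub_sq_eq_card_mul_add v x] at h
  set c := (Fintype.card ι : ℝ)⁻¹ • ∑ j, v j
  have hcard : (0 : ℝ) < Fintype.card ι := by exact_mod_cast Fintype.card_pos
  have hsq : ‖x - c‖ ^ 2 = 0 :=
    le_antisymm (nonpos_of_mul_nonpos_right (by linarith) hcard) (sq_nonneg _)
  simpa [sub_eq_zero] using hsq

end MeanSquaredDistance

section Frobenius

variable {p : ℕ}

def frobEquiv (p : ℕ) : Matrix (Fin p) (Fin p) ℝ ≃ₗ[ℝ] EuclideanSpace ℝ (Fin p × Fin p) :=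
  (LinearEquiv.curry ℝ ℝ (Fin p) (Fin p)).symm.trans (WithLp.linearEquiv 2 ℝ _).symm

theorem frob_eq_norm_frobEquiv (A : Matrix (Fin p) (Fin p) ℝ) : frob A = ‖frobEquiv p A‖ := by
  rw [frob, EuclideanSpace.norm_eq, Fintype.sum_prod_type]
  simp only [Real.norm_eq_abs, sq_abs]
  rfl

theorem dS_eq_norm_sub (A B : Matrix (Fin p) (Fin p) ℝ) :
    dS A B = ‖frobEquiv p (msqrt A) - frobEquiv p (msqrt B)‖ := by
  rw [dS, frob_eq_norm_frobEquiv, map_sub]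

end Frobenius

section SquareRoot

variable {p : ℕ}

theorem msqrt_eq_cfcSqrt {A : Matrix (Fin p) (Fin p) ℝ} (hA : A.PosSemidef) :
    msqrt A = CFC.sqrt A := by
  rw [msqrt, dif_pos hA, CFC.sqrt_eq_real_sqrt A hA.nonneg, cfcₙ_eq_cfc, hA.1.cfc_eq,
    IsHermitian.cfc, Unitary.conjStarAlgAut_apply]
  rfl

theorem posSemidef_msqrt {A : Matrix (Fin p) (Fin p) ℝ} (hA : A.PosSemidef) :
    (msqrt A).PosSemidef := by
  rw [msqrt_eq_cfcSqrt hA]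
  exact (CFC.sqrt_nonneg A).posSemidef

theorem msqrt_mul_self {A : Matrix (Fin p) (Fin p) ℝ} (hA : A.PosSemidef) :
    msqrt A * msqrt A = A := by
  rw [msqrt_eq_cfcSqrt hA]
  exact CFC.sqrt_mul_sqrt_self A hA.nonneg

theorem posSemidef_mul_self {B : Matrix (Fin p) (Fin p) ℝ} (hB : B.PosSemidef) :
    (B * B).PosSemidef := by
  have h := posSemidef_conjTranspose_mul_self B
  rwa [hB.1.eq] at h

theorem posSemidef_vecMulVec_self (u : Fin p → ℝ) : (vecMulVec u u).PosSemidef := by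
  simpa using posSemidef_vecMulVec_self_star u

theorem msqrt_eq_of_mul_self_eq {A B : Matrix (Fin p) (Fin p) ℝ} (hB : B.PosSemidef)
    (h : B * B = A) : msqrt A = B := by
  rw [msqrt_eq_cfcSqrt (h ▸ posSemidef_mul_self hB)]
  exact CFC.sqrt_unique h hB.nonneg

theorem eunorm_sq (u : Fin p → ℝ) : eunorm u ^ 2 = u ⬝ᵥ u := by
  rw [eunorm, Real.sq_sqrt (by positivity)]
  simp [dotProduct, sq]

theorem msqrt_vecMulVec_self (u : Fin p → ℝ) :
    msqrt (vecMulVec u u) = if u = 0 then 0 else (eunorm u)⁻¹ • vecMulVec u u := by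
  split_ifs with hu
  · subst hu
    exact msqrt_eq_of_mul_self_eq PosSemidef.zero (by simp)
  · have hnorm : eunorm u ^ 2 ≠ 0 := by rwa [eunorm_sq, Ne, dotProduct_self_eq_zero]
    have hscale : 0 ≤ (eunorm u)⁻¹ := inv_nonneg.mpr (Real.sqrt_nonneg _)
    refine msqrt_eq_of_mul_self_eq ((posSemidef_vecMulVec_self u).smul hscale) ?_
    rw [smul_mul_smul_comm, vecMulVec_mul_vecMulVec, vecMulVec_smul, smul_smul, ← eunorm_sq,
      ← sq, inv_pow, inv_mul_cancel₀ hnorm, one_smul]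

end SquareRoot

/-- For `u₁,…,uₙ ∈ ℝ^p`, the matrix
`Ω̆ = ((1/n) Σᵢ (uᵢuᵢᵀ)^{1/2})² = ((1/n) Σ_{i : uᵢ ≠ 0} uᵢuᵢᵀ/‖uᵢ‖)²` is symmetric positive
semidefinite and is the unique minimizer over psd `Ω` of `Ω ↦ (1/n) Σᵢ d_S²(Ω, uᵢuᵢᵀ)`. -/
theorem stmt13 {p n : ℕ} (hn : 0 < n) (u : Fin n → Fin p → ℝ)
    (Ωbreve : Matrix (Fin p) (Fin p) ℝ)
    (hΩbreve : Ωbreve =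
      ((n : ℝ)⁻¹ • ∑ i, msqrt (vecMulVec (u i) (u i))) *
      ((n : ℝ)⁻¹ • ∑ i, msqrt (vecMulVec (u i) (u i)))) :
    Ωbreve =
      ((n : ℝ)⁻¹ • ∑ i, if u i = 0 then 0 else (eunorm (u i))⁻¹ • vecMulVec (u i) (u i)) *
      ((n : ℝ)⁻¹ • ∑ i, if u i = 0 then 0 else (eunorm (u i))⁻¹ • vecMulVec (u i) (u i)) ∧
    Ωbreve.PosSemidef ∧
    (∀ W : Matrix (Fin p) (Fin p) ℝ, W.PosSemidef →
      (n : ℝ)⁻¹ * ∑ i, dS Ωbreve (vecMulVec (u i) (u i)) ^ 2 ≤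
        (n : ℝ)⁻¹ * ∑ i, dS W (vecMulVec (u i) (u i)) ^ 2) ∧
    (∀ W : Matrix (Fin p) (Fin p) ℝ, W.PosSemidef →
      ((n : ℝ)⁻¹ * ∑ i, dS W (vecMulVec (u i) (u i)) ^ 2) ≤
        ((n : ℝ)⁻¹ * ∑ i, dS Ωbreve (vecMulVec (u i) (u i)) ^ 2) → W = Ωbreve) := by
  have : Nonempty (Fin n) := ⟨⟨0, hn⟩⟩
  set S : Fin n → Matrix (Fin p) (Fin p) ℝ := fun i => msqrt (vecMulVec (u i) (u i))
  set Sbar := (n : ℝ)⁻¹ • ∑ i, S i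
  have hSbar : Sbar.PosSemidef :=
    (posSemidef_sum _ fun i _ => posSemidef_msqrt (posSemidef_vecMulVec_self (u i))).smul
      (by positivity)
  have hmsqrtΩ : msqrt Ωbreve = Sbar := msqrt_eq_of_mul_self_eq hSbar hΩbreve.symm
  have hmean : frobEquiv p Sbar = (Fintype.card (Fin n) : ℝ)⁻¹ • ∑ i, frobEquiv p (S i) := by
    simp [Sbar, map_sum]
  have hobj : ∀ W, ∑ i, dS W (vecMulVec (u i) (u i)) ^ 2 =
      ∑ i, ‖frobEquiv p (msqrt W) - frobEquiv p (S i)‖ ^ 2 := fun W => by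
    simp only [dS_eq_norm_sub, S]
  refine ⟨?_, hΩbreve ▸ posSemidef_mul_self hSbar, fun W _ => ?_, fun W hW hle => ?_⟩
  · simp only [hΩbreve, Sbar, S, msqrt_vecMulVec_self]
  · rw [hobj, hobj, hmsqrtΩ, hmean]
    exact mul_le_mul_of_nonneg_left (sum_norm_mean_sub_sq_le _ _) (by positivity)
  · rw [hobj, hobj, hmsqrtΩ, hmean] at hle
    have h := eq_mean_of_sum_norm_sub_sq_le (le_of_mul_le_mul_left hle (by positivity))
    rw [← hmean] at h
    rw [hΩbreve, ← (frobEquiv p).injective h, msqrt_mul_self hW]
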